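/- Let T be a finite nonempty index set, let μ, ν : T → ℝ≥0 be nonnegative weights with Σ_{t∈T} μ(t) ≤ 1, let d ≥ 1, and let b : T → ℝ^d satisfy ‖b(t)‖₂ ≤ 1 for all t ∈ T (Euclidean norm). Suppose the smallest eigenvalue of Σ := Σ_{t∈T} ν(t) b(t) b(t)ᵀ satisfies λ_min(Σ) ≥ 1/C for some C > 0. Then for every m ≥ 1 and every matrix X ∈ ℝ^{m×d}, Σ_{t∈T} μ(t) ‖X b(t)‖₁ ≤ C · Σ_{t∈T} ν(t) ‖X b(t)‖₁, where ‖·‖₁ on vectors is the sum of absolute values of entries. -/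

import Mathlib

open Matrix

/-- The `L1` norm of a vector: the sum of the absolute values of its entries. -/
def vecL1 {n : Type*} [Fintype n] (x : n → ℝ) : ℝ := ∑ i, |x i|

/-- The Euclidean norm of a vector. -/
noncomputable def eucNorm {n : Type*} [Fintype n] (x : n → ℝ) : ℝ :=
  Real.sqrt (∑ i, x i ^ 2)

/-!
For a row `x` of `X`, the eigenvalue bound gives
`‖x‖² / C ≤ xᵀ Σ x = ∑ₜ ν(t) (x ⬝ b(t))² ≤ ‖x‖ ∑ₜ ν(t) |x ⬝ b(t)|`, using `|x ⬝ b(t)| ≤ ‖x‖`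
(Cauchy–Schwarz and `‖b(t)‖ ≤ 1`); hence `‖x‖ ≤ C ∑ₜ ν(t) |x ⬝ b(t)|`. On the other side the
same Cauchy–Schwarz bound and `∑ₜ μ(t) ≤ 1` give `∑ₜ μ(t) |x ⬝ b(t)| ≤ ‖x‖`. Summing over the
rows of `X` yields the claim.
-/

section
variable {n : Type*} [Fintype n]

lemma eucNorm_eq_norm_toLp (x : n → ℝ) : eucNorm x = ‖WithLp.toLp 2 x‖ := by
  simp [eucNorm, EuclideanSpace.norm_eq]

lemma eucNorm_nonneg (x : n → ℝ) : 0 ≤ eucNorm x := Real.sqrt_nonneg _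

lemma eucNorm_sq (x : n → ℝ) : eucNorm x ^ 2 = x ⬝ᵥ x := by
  rw [eucNorm, Real.sq_sqrt (by positivity)]
  simp [dotProduct, sq]

lemma abs_dotProduct_le_eucNorm_mul (x y : n → ℝ) : |x ⬝ᵥ y| ≤ eucNorm x * eucNorm y := by
  simpa [eucNorm_eq_norm_toLp, EuclideanSpace.inner_eq_star_dotProduct, dotProduct_comm x]
    using abs_real_inner_le_norm (WithLp.toLp 2 x : EuclideanSpace ℝ n) (WithLp.toLp 2 y)

open scoped MatrixOrder in
lemma Matrix.IsHermitian.mul_dotProduct_self_le [DecidableEq n] {A : Matrix n n ℝ}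
    (hA : A.IsHermitian) {c : ℝ} (hc : ∀ i, c ≤ hA.eigenvalues i) (x : n → ℝ) :
    c * (x ⬝ᵥ x) ≤ x ⬝ᵥ A *ᵥ x := by
  have hle : algebraMap ℝ _ c ≤ A := by
    rw [algebraMap_le_iff_le_spectrum (a := A) hA.isSelfAdjoint,
      hA.spectrum_real_eq_range_eigenvalues]
    rintro _ ⟨i, rfl⟩
    exact hc i
  have := (Matrix.le_iff.mp hle).dotProduct_mulVec_nonneg x
  simpa [Algebra.algebraMap_eq_smul_one, sub_mulVec, smul_mulVec, dotProduct_sub] using this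

lemma vecL1_mulVec {m : Type*} [Fintype m] (X : Matrix m n ℝ) (v : n → ℝ) :
    vecL1 (X *ᵥ v) = ∑ i, |X i ⬝ᵥ v| := rfl

lemma vecL1_mulVec_le {m : Type*} [Fintype m] (X : Matrix m n ℝ) (v : n → ℝ) :
    vecL1 (X *ᵥ v) ≤ (∑ i, eucNorm (X i)) * eucNorm v := by
  rw [vecL1_mulVec, Finset.sum_mul]
  exact Finset.sum_le_sum fun i _ => abs_dotProduct_le_eucNorm_mul _ _

variable {T : Type*} [Fintype T]

lemma dotProduct_sum_smul_vecMulVec_mulVec (ν : T → ℝ) (b : T → n → ℝ) (x : n → ℝ) :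
    x ⬝ᵥ (∑ t, ν t • vecMulVec (b t) (b t)) *ᵥ x = ∑ t, ν t * (x ⬝ᵥ b t) ^ 2 := by
  simp only [sum_mulVec, dotProduct_sum, smul_mulVec, vecMulVec_mulVec, dotProduct_smul]
  refine Finset.sum_congr rfl fun t _ => ?_
  simp [dotProduct_comm (b t) x, sq]

lemma mul_eucNorm_le_sum_mul_abs_dotProduct [DecidableEq n] {ν : T → ℝ} (hν : ∀ t, 0 ≤ ν t)
    {b : T → n → ℝ} (hb : ∀ t, eucNorm (b t) ≤ 1)
    (hA : (∑ t, ν t • vecMulVec (b t) (b t)).IsHermitian) {c : ℝ}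
    (hc : ∀ i, c ≤ hA.eigenvalues i) (x : n → ℝ) :
    c * eucNorm x ≤ ∑ t, ν t * |x ⬝ᵥ b t| := by
  have hdot : ∀ t, |x ⬝ᵥ b t| ≤ eucNorm x := fun t =>
    (abs_dotProduct_le_eucNorm_mul x (b t)).trans
      (mul_le_of_le_one_right (eucNorm_nonneg x) (hb t))
  have hquad : eucNorm x * (c * eucNorm x) ≤ eucNorm x * ∑ t, ν t * |x ⬝ᵥ b t| := calc
    eucNorm x * (c * eucNorm x) = c * (x ⬝ᵥ x) := by rw [← eucNorm_sq]; ring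
    _ ≤ x ⬝ᵥ (∑ t, ν t • vecMulVec (b t) (b t)) *ᵥ x := hA.mul_dotProduct_self_le hc x
    _ = ∑ t, ν t * (x ⬝ᵥ b t) ^ 2 := dotProduct_sum_smul_vecMulVec_mulVec ν b x
    _ ≤ ∑ t, ν t * (eucNorm x * |x ⬝ᵥ b t|) := by
      gcongr with t
      · exact hν t
      · rw [← sq_abs, sq]
        exact mul_le_mul_of_nonneg_right (hdot t) (abs_nonneg _)
    _ = eucNorm x * ∑ t, ν t * |x ⬝ᵥ b t| := by
      rw [Finset.mul_sum]
      exact Finset.sum_congr rfl fun t _ => by ring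
  rcases (eucNorm_nonneg x).eq_or_lt with hx | hx
  · rw [← hx, mul_zero]
    exact Finset.sum_nonneg fun t _ => mul_nonneg (hν t) (abs_nonneg _)
  · exact le_of_mul_le_mul_left hquad hx

end

theorem target_error_le_coverage_mul_behavior_error_general
    {T : Type*} [Fintype T]
    (μ ν : T → ℝ) (hμ : ∀ t, 0 ≤ μ t) (hν : ∀ t, 0 ≤ ν t)
    (hμsum : ∑ t, μ t ≤ 1)
    (d : ℕ)
    (b : T → Fin d → ℝ) (hb : ∀ t, eucNorm (b t) ≤ 1)
    (Sigm : Matrix (Fin d) (Fin d) ℝ)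
    (hSig : Sigm = ∑ t, ν t • Matrix.vecMulVec (b t) (b t))
    (hherm : Sigm.IsHermitian)
    (C : ℝ) (hC : 0 < C)
    (hmin : 1 / C ≤ ⨅ i, hherm.eigenvalues i) :
    ∀ (m : ℕ), 1 ≤ m → ∀ X : Matrix (Fin m) (Fin d) ℝ,
      ∑ t, μ t * vecL1 (X.mulVec (b t)) ≤ C * ∑ t, ν t * vecL1 (X.mulVec (b t)) := by
  intro m _ X
  subst hSig
  have heig : ∀ i, 1 / C ≤ hherm.eigenvalues i := fun i =>
    hmin.trans (ciInf_le (Set.finite_range _).bddBelow i)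
  set K := ∑ i, eucNorm (X i)
  have hK : 0 ≤ K := Finset.sum_nonneg fun i _ => eucNorm_nonneg _
  calc ∑ t, μ t * vecL1 (X *ᵥ b t) ≤ ∑ t, μ t * K := by
        gcongr with t
        · exact hμ t
        · exact (vecL1_mulVec_le X (b t)).trans (mul_le_of_le_one_right hK (hb t))
    _ = (∑ t, μ t) * K := (Finset.sum_mul ..).symm
    _ ≤ K := mul_le_of_le_one_left hK hμsum
    _ ≤ ∑ i, C * ∑ t, ν t * |X i ⬝ᵥ b t| := Finset.sum_le_sum fun i _ => by
        have := mul_eucNorm_le_sum_mul_abs_dotProduct hν hb hherm heig (X i)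
        rwa [one_div_mul_eq_div, div_le_iff₀' hC] at this
    _ = C * ∑ t, ν t * vecL1 (X *ᵥ b t) := by
        rw [← Finset.mul_sum, Finset.sum_comm]
        simp only [vecL1_mulVec, Finset.mul_sum]

/-- Abstract form of the bound `C_eff ≤ C_A C_H` (Theorems 3 and 4): if the belief coverage
matrix `Σ = Σ_t ν(t) b(t)b(t)ᵀ` has smallest eigenvalue at least `1/C`, then for every
matrix `X`, `Σ_t μ(t) ‖X b(t)‖₁ ≤ C Σ_t ν(t) ‖X b(t)‖₁`. -/
theorem target_error_le_coverage_mul_behavior_error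
    {T : Type*} [Fintype T] [Nonempty T]
    (μ ν : T → ℝ) (hμ : ∀ t, 0 ≤ μ t) (hν : ∀ t, 0 ≤ ν t)
    (hμsum : ∑ t, μ t ≤ 1)
    (d : ℕ) (hd : 1 ≤ d)
    (b : T → Fin d → ℝ) (hb : ∀ t, eucNorm (b t) ≤ 1)
    (Sigm : Matrix (Fin d) (Fin d) ℝ)
    (hSig : Sigm = ∑ t, ν t • Matrix.vecMulVec (b t) (b t))
    (hherm : Sigm.IsHermitian)
    (C : ℝ) (hC : 0 < C)
    (hmin : 1 / C ≤ ⨅ i, hherm.eigenvalues i) :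
    ∀ (m : ℕ), 1 ≤ m → ∀ X : Matrix (Fin m) (Fin d) ℝ,
      ∑ t, μ t * vecL1 (X.mulVec (b t)) ≤ C * ∑ t, ν t * vecL1 (X.mulVec (b t)) :=
  target_error_le_coverage_mul_behavior_error_general μ ν hμ hν hμsum d b hb Sigm hSig hherm C hC
    hmin
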